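/- arXiv:2301.09677 — 12 statements merged into one kernel-verified Lean document; each statement's English description precedes it below -/
import Mathlib

section
/- If f is L-additive with h_f(p_i) ≠ 0 for all prime factors p_i of n, and n = p_1^{a_1}⋯p_s^{a_s} is the prime factorization of n, then f(n) = h_f(n) · Σ_{i=1}^s a_i f(p_i)/h_f(p_i). -/
open Finset

def IsCompletelyMultiplicative (h : ℕ → ℂ) : Prop :=
  h 1 = 1 ∧ ∀ m n : ℕ, 0 < m → 0 < n → h (m * n) = h m * h n

def IsLAdditive (f h : ℕ → ℂ) : Prop :=
  IsCompletelyMultiplicative h ∧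
    ∀ m n : ℕ, 0 < m → 0 < n → f (m * n) = f m * h n + f n * h m

def IsCompletelyAdditive (g : ℕ → ℂ) : Prop :=
  ∀ m n : ℕ, 0 < m → 0 < n → g (m * n) = g m + g n

/-- Generalized von Mangoldt function associated to an L-additive `f` with component `h`. -/
noncomputable def genVonMangoldt (f h : ℕ → ℂ) (n : ℕ) : ℂ :=
  if IsPrimePow n then f n.minFac / h n.minFac else 0

theorem stmt1 (f h : ℕ → ℂ) (hL : IsLAdditive f h) (n : ℕ) (hn : 0 < n)
    (hne : ∀ p ∈ n.primeFactors, h p ≠ 0) :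
    f n = h n * ∑ p ∈ n.primeFactors, (n.factorization p : ℂ) * f p / h p := by
  induction n using Nat.strong_induction_on with
  | _ n ih =>
  rcases eq_or_ne n 1 with rfl | hne1
  · have h1 : h 1 = 1 := hL.1.1
    have hf1 : f 1 = 0 := by
      have := hL.2 1 1 one_pos one_pos
      simp [h1] at this
      linear_combination this
    simp [hf1]
  · set p := n.minFac with hpdef
    have hpp : p.Prime := Nat.minFac_prime hne1
    obtain ⟨m, hm⟩ := n.minFac_dvd
    have hm0 : 0 < m := by
      rcases Nat.eq_zero_or_pos m with h0 | h0
      · simp [h0] at hm; omega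
      · exact h0
    have hmlt : m < n := by
      have h2 := hpp.two_le
      have : 1 * m < n.minFac * m := Nat.mul_lt_mul_of_lt_of_le (by omega) le_rfl hm0
      omega
    have hmdvd : m ∣ n := ⟨p, by rw [hm]; ring⟩
    have hpf : m.primeFactors ⊆ n.primeFactors :=
      Nat.primeFactors_mono hmdvd hn.ne'
    have hnem : ∀ q ∈ m.primeFactors, h q ≠ 0 := fun q hq => hne q (hpf hq)
    have ihm := ih m hmlt hm0 hnem
    have hpmem : p ∈ n.primeFactors :=
      Nat.mem_primeFactors.mpr ⟨hpp, n.minFac_dvd, hn.ne'⟩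
    have hhp : h p ≠ 0 := hne p hpmem
    have hhn : h n = h p * h m := by rw [hm]; exact hL.1.2 p m hpp.pos hm0
    have hfn : f n = f p * h m + f m * h p := by rw [hm]; exact hL.2 p m hpp.pos hm0
    have hfact : ∀ q, (n.factorization q : ℂ) =
        (if q = p then 1 else 0) + (m.factorization q : ℂ) := by
      intro q
      rw [hm, Nat.factorization_mul hpp.pos.ne' hm0.ne']
      rw [hpp.factorization]
      simp [Finsupp.single_apply, eq_comm]
    have hsum1 : (∑ q ∈ n.primeFactors, (if q = p then (1:ℂ) else 0) * f q / h q)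
        = f p / h p := by
      rw [Finset.sum_congr rfl (fun q _ => by split_ifs <;> simp :
        ∀ q ∈ n.primeFactors, (if q = p then (1:ℂ) else 0) * f q / h q
          = if q = p then f q / h q else 0)]
      rw [Finset.sum_ite_eq' n.primeFactors p (fun q => f q / h q), if_pos hpmem]
    have hsum2 : (∑ q ∈ n.primeFactors, (m.factorization q : ℂ) * f q / h q)
        = ∑ q ∈ m.primeFactors, (m.factorization q : ℂ) * f q / h q := by
      refine (Finset.sum_subset hpf ?_).symm
      intro q _ hq
      have : m.factorization q = 0 := by
        rwa [← Finsupp.notMem_support_iff, Nat.support_factorization]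
      simp [this]
    have hsum : (∑ q ∈ n.primeFactors, (n.factorization q : ℂ) * f q / h q)
        = f p / h p + ∑ q ∈ m.primeFactors, (m.factorization q : ℂ) * f q / h q := by
      calc (∑ q ∈ n.primeFactors, (n.factorization q : ℂ) * f q / h q)
          = ∑ q ∈ n.primeFactors, ((if q = p then (1:ℂ) else 0) * f q / h q
              + (m.factorization q : ℂ) * f q / h q) :=
            Finset.sum_congr rfl (fun q _ => by rw [hfact q]; ring)
        _ = _ := by rw [Finset.sum_add_distrib, hsum1, hsum2]
    rw [hfn, ihm, hhn, hsum]
    field_simp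
end

section
/- If f is L-additive with h_f nonzero-valued, then the Dirichlet convolution of f with h_f satisfies (f * h_f)(n) = (1/2) f(n) τ(n), where τ(n) is the number of divisors of n. -/
open Finset

theorem stmt2 (f h : ℕ → ℂ) (hL : IsLAdditive f h)
    (hne : ∀ n : ℕ, 0 < n → h n ≠ 0) (n : ℕ) (hn : 0 < n) :
    ∑ d ∈ n.divisors, f d * h (n / d) = (1 / 2) * f n * (n.divisors.card : ℂ) := by
  have hsym : ∑ d ∈ n.divisors, f (n / d) * h d = ∑ d ∈ n.divisors, f d * h (n / d) := by
    rw [← Nat.sum_div_divisors n (fun d => f (n / d) * h d)]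
    refine Finset.sum_congr rfl fun d hd => ?_
    rw [Nat.div_div_self (Nat.mem_divisors.mp hd).1 hn.ne']
  have key : ∀ d ∈ n.divisors, f d * h (n / d) + f (n / d) * h d = f n := by
    intro d hd
    obtain ⟨hdvd, -⟩ := Nat.mem_divisors.mp hd
    have hd0 : 0 < d := Nat.pos_of_dvd_of_pos hdvd hn
    have hq0 : 0 < n / d := Nat.div_pos (Nat.le_of_dvd hn hdvd) hd0
    have := hL.2 d (n / d) hd0 hq0
    rw [Nat.mul_div_cancel' hdvd] at this
    exact this.symm
  have hsum : (∑ d ∈ n.divisors, f d * h (n / d)) + ∑ d ∈ n.divisors, f (n / d) * h d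
      = (n.divisors.card : ℂ) * f n := by
    rw [← Finset.sum_add_distrib, Finset.sum_congr rfl key, Finset.sum_const, nsmul_eq_mul]
  rw [hsym] at hsum
  linear_combination hsum / 2
end

section
/- Let f be L-additive with h_f nonzero-valued, and define Λ_f(n) = f(p)/h_f(p) if n = p^k for a prime p and integer k ≥ 1, and Λ_f(n) = 0 otherwise. Then for all n ≥ 1, f(n) = h_f(n) · Σ_{d|n} Λ_f(d). -/
open Finset

lemma gvm_one (f h : ℕ → ℂ) : genVonMangoldt f h 1 = 0 := by
  simp [genVonMangoldt, not_isPrimePow_one]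

lemma gvm_coprime_mul (f h : ℕ → ℂ) {a b : ℕ} (ha : a ≠ 1) (hb : b ≠ 1)
    (hab : Nat.Coprime a b) : genVonMangoldt f h (a * b) = 0 := by
  rw [genVonMangoldt, if_neg]
  intro hpp
  obtain ⟨p, k, hp, hk, he⟩ := hpp
  rw [← Nat.prime_iff] at hp
  obtain ⟨i, hi, hai⟩ := (Nat.dvd_prime_pow hp).mp (he ▸ Dvd.intro b rfl)
  obtain ⟨j, hj, hbj⟩ := (Nat.dvd_prime_pow hp).mp (he ▸ Dvd.intro_left a rfl)
  subst hai; subst hbj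
  rcases Nat.eq_zero_or_pos i with hi0 | hi0
  · exact ha (by simp [hi0])
  rcases Nat.eq_zero_or_pos j with hj0 | hj0
  · exact hb (by simp [hj0])
  have h1 := (Nat.coprime_pow_left_iff hi0 p (p ^ j)).mp hab
  have h2 := (Nat.coprime_pow_right_iff hj0 p p).mp h1
  rw [Nat.Coprime, Nat.gcd_self] at h2
  exact hp.one_lt.ne' h2

/-- Splitting the divisor sum over a coprime product. -/
lemma gvm_sum_coprime (f h : ℕ → ℂ) {m n : ℕ} (hm : 0 < m) (hn : 0 < n)
    (hmn : Nat.Coprime m n) :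
    ∑ d ∈ (m * n).divisors, genVonMangoldt f h d =
      (∑ d ∈ m.divisors, genVonMangoldt f h d) + ∑ d ∈ n.divisors, genVonMangoldt f h d := by
  have key : ∑ d ∈ (m * n).divisors, genVonMangoldt f h d
      = ∑ x ∈ m.divisors ×ˢ n.divisors, genVonMangoldt f h (x.1 * x.2) := by
    refine Finset.sum_nbij' (fun d => (Nat.gcd d m, Nat.gcd d n)) (fun x => x.1 * x.2) ?_ ?_ ?_ ?_ ?_
    · intro d hd
      simp only [Nat.mem_divisors] at hd
      simp only [Finset.mem_product, Nat.mem_divisors]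
      exact ⟨⟨Nat.gcd_dvd_right _ _, hm.ne'⟩, ⟨Nat.gcd_dvd_right _ _, hn.ne'⟩⟩
    · intro x hx
      simp only [Finset.mem_product, Nat.mem_divisors] at hx
      exact Nat.mem_divisors.mpr ⟨mul_dvd_mul hx.1.1 hx.2.1, (Nat.mul_pos hm hn).ne'⟩
    · intro d hd
      simp only [Nat.mem_divisors] at hd
      exact (Nat.gcd_mul_gcd_eq_iff_dvd_mul_of_coprime hmn).mpr hd.1
    · intro x hx
      simp only [Finset.mem_product, Nat.mem_divisors] at hx
      have h1 : Nat.gcd (x.1 * x.2) m = x.1 := by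
        have hc : Nat.Coprime x.2 m := (hmn.symm.coprime_dvd_left hx.2.1)
        rw [mul_comm, Nat.Coprime.gcd_mul_left_cancel _ hc, Nat.gcd_eq_left hx.1.1]
      have h2 : Nat.gcd (x.1 * x.2) n = x.2 := by
        have hc : Nat.Coprime x.1 n := (hmn.coprime_dvd_left hx.1.1)
        rw [Nat.Coprime.gcd_mul_left_cancel _ hc, Nat.gcd_eq_left hx.2.1]
      simp [h1, h2]
    · intro d hd
      simp only []
      rw [(Nat.gcd_mul_gcd_eq_iff_dvd_mul_of_coprime hmn).mpr (Nat.mem_divisors.mp hd).1]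
  rw [key, Finset.sum_product]
  have inner : ∀ a ∈ m.divisors, (∑ b ∈ n.divisors, genVonMangoldt f h (a * b))
      = genVonMangoldt f h a + (if a = 1 then ∑ d ∈ n.divisors, genVonMangoldt f h d else 0) := by
    intro a ha
    rcases eq_or_ne a 1 with rfl | ha1
    · simp [gvm_one]
    · rw [if_neg ha1, add_zero]
      rw [Finset.sum_eq_single 1]
      · simp
      · intro b hb hb1
        exact gvm_coprime_mul f h ha1 hb1
          ((hmn.coprime_dvd_left (Nat.mem_divisors.mp ha).1).coprime_dvd_right
            (Nat.mem_divisors.mp hb).1)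
      · intro hcon
        exact absurd (Nat.one_mem_divisors.mpr hn.ne') hcon
  rw [Finset.sum_congr rfl inner, Finset.sum_add_distrib, Finset.sum_ite_eq'
    m.divisors 1 (fun _ => ∑ d ∈ n.divisors, genVonMangoldt f h d)]
  rw [if_pos (Nat.one_mem_divisors.mpr hm.ne')]

theorem stmt3 (f h : ℕ → ℂ) (hL : IsLAdditive f h)
    (hne : ∀ n : ℕ, 0 < n → h n ≠ 0) (n : ℕ) (hn : 0 < n) :
    f n = h n * ∑ d ∈ n.divisors, genVonMangoldt f h d := by
  obtain ⟨⟨h1, hmul⟩, hfadd⟩ := hL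
  have hf1 : f 1 = 0 := by
    have := hfadd 1 1 one_pos one_pos
    simp only [mul_one, h1] at this
    exact (left_eq_add.mp this)
  induction n using Nat.recOnPosPrimePosCoprime with
  | zero => exact absurd hn (lt_irrefl 0)
  | one => simp [hf1, Nat.divisors_one, gvm_one]
  | prime_pow p k hp hk =>
    have hp' := hp
    have hppos : (0:ℕ) < p := hp'.pos
    -- divisor sum
    have hsum : ∑ d ∈ (p ^ k).divisors, genVonMangoldt f h d = k * (f p / h p) := by
      rw [Nat.sum_divisors_prime_pow hp']
      have : ∀ i ∈ range (k + 1), genVonMangoldt f h (p ^ i)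
          = if i = 0 then 0 else f p / h p := by
        intro i _
        rcases eq_or_ne i 0 with rfl | hi0
        · simp [gvm_one]
        · rw [if_neg hi0, genVonMangoldt, if_pos ⟨p, i, hp.prime, Nat.pos_of_ne_zero hi0, rfl⟩,
            Nat.Prime.pow_minFac hp' hi0]
      rw [Finset.sum_congr rfl this]
      have h2 : ∀ i : ℕ, (if i = 0 then (0:ℂ) else f p / h p)
          = f p / h p - (if i = 0 then f p / h p else 0) := by
        intro i; split <;> ring
      simp_rw [h2]
      rw [Finset.sum_sub_distrib, Finset.sum_const, Finset.card_range,
        Finset.sum_ite_eq' (range (k+1)) 0 (fun _ => f p / h p),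
        if_pos (Finset.mem_range.mpr k.succ_pos)]
      push_cast; ring
    rw [hsum]
    have hhp := hne p hp'.pos
    have aux : ∀ j : ℕ, f (p ^ j) * h p = h (p ^ j) * (j * f p) := by
      intro j
      induction j with
      | zero => simp [hf1]
      | succ j ih =>
        have hpj : 0 < p ^ j := pow_pos hp'.pos j
        rw [pow_succ, hfadd _ _ hpj hp'.pos, hmul _ _ hpj hp'.pos]
        push_cast
        linear_combination h p * ih
    have hfin : f (p ^ k) = h (p ^ k) * ((k : ℂ) * f p) / h p := by
      rw [← aux k]; field_simp
    rw [hfin]; ring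
  | coprime a b ha hb hab iha ihb =>
    have hapos : 0 < a := lt_trans one_pos ha
    have hbpos : 0 < b := lt_trans one_pos hb
    rw [hfadd a b hapos hbpos, iha hapos, ihb hbpos, gvm_sum_coprime f h hapos hbpos hab,
      hmul a b hapos hbpos]
    ring
end

section
/- Let f be L-additive with h_f nonzero-valued. Then Λ_f(n) = Σ_{d|n} μ(n/d) f(d)/h_f(d), where μ is the Möbius function. -/
open Finset

lemma gAdd (f h : ℕ → ℂ) (hL : IsLAdditive f h) (hne : ∀ n : ℕ, 0 < n → h n ≠ 0)
    (m n : ℕ) (hm : 0 < m) (hn : 0 < n) :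
    f (m * n) / h (m * n) = f m / h m + f n / h n := by
  rw [hL.2 m n hm hn, hL.1.2 m n hm hn]
  field_simp [hne m hm, hne n hn]

lemma f_one (f h : ℕ → ℂ) (hL : IsLAdditive f h) : f 1 = 0 := by
  have := hL.2 1 1 one_pos one_pos
  rw [mul_one, hL.1.1, mul_one] at this
  linear_combination -this

lemma g_pow (f h : ℕ → ℂ) (hL : IsLAdditive f h) (hne : ∀ n : ℕ, 0 < n → h n ≠ 0)
    (p : ℕ) (hp : 0 < p) (k : ℕ) :
    f (p ^ k) / h (p ^ k) = k * (f p / h p) := by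
  induction k with
  | zero => simp [f_one f h hL]
  | succ k ih =>
      rw [pow_succ, gAdd f h hL hne _ p (pow_pos hp k) hp, ih]
      push_cast; ring

lemma gvm_sum (f h : ℕ → ℂ) (hL : IsLAdditive f h) (hne : ∀ n : ℕ, 0 < n → h n ≠ 0) :
    ∀ n : ℕ, 0 < n → ∑ i ∈ n.divisors, genVonMangoldt f h i = f n / h n := by
  refine Nat.recOnPosPrimePosCoprime ?_ ?_ ?_ ?_
  · intro p k hp hk _
    rw [Nat.sum_divisors_prime_pow hp, Finset.sum_range_succ', Nat.pow_zero]
    have h1 : genVonMangoldt f h 1 = 0 := by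
      simp [genVonMangoldt, not_isPrimePow_one]
    have hpi : ∀ i : ℕ, genVonMangoldt f h (p ^ (i + 1)) = f p / h p := by
      intro i
      have hip : IsPrimePow (p ^ (i + 1)) := hp.prime.isPrimePow.pow (Nat.succ_ne_zero i)
      rw [genVonMangoldt, if_pos hip, Nat.pow_minFac (Nat.succ_ne_zero i),
        (Nat.Prime.minFac_eq hp)]
    simp only [hpi, h1, add_zero, Finset.sum_const, Finset.card_range, nsmul_eq_mul]
    rw [g_pow f h hL hne p hp.pos k]
  · intro h0; exact absurd h0 (lt_irrefl 0)
  · intro _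
    simp [genVonMangoldt, not_isPrimePow_one, f_one f h hL]
  · intro a b ha' hb' hab ha hb _
    have ha0 : 0 < a := lt_trans one_pos ha'
    have hb0 : 0 < b := lt_trans one_pos hb'
    have key : ∀ m : ℕ, ∑ i ∈ m.divisors, genVonMangoldt f h i
        = ∑ i ∈ m.divisors.filter IsPrimePow, genVonMangoldt f h i := by
      intro m
      rw [Finset.sum_filter]
      refine Finset.sum_congr rfl fun i _ => ?_
      by_cases hi : IsPrimePow i
      · rw [if_pos hi]
      · rw [if_neg hi, genVonMangoldt, if_neg hi]
    rw [key, Nat.mul_divisors_filter_prime_pow hab, Finset.filter_union,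
      Finset.sum_union (Nat.disjoint_divisors_filter_isPrimePow hab),
      ← key, ← key, ha ha0, hb hb0, gAdd f h hL hne a b ha0 hb0]

theorem stmt4 (f h : ℕ → ℂ) (hL : IsLAdditive f h)
    (hne : ∀ n : ℕ, 0 < n → h n ≠ 0) (n : ℕ) (hn : 0 < n) :
    genVonMangoldt f h n =
      ∑ d ∈ n.divisors, (ArithmeticFunction.moebius (n / d) : ℂ) * f d / h d := by
  have := (ArithmeticFunction.sum_eq_iff_sum_smul_moebius_eq
    (f := genVonMangoldt f h) (g := fun n => f n / h n)).mp (gvm_sum f h hL hne) n hn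
  rw [← this, ← Nat.sum_divisorsAntidiagonal'
    (fun a b => (ArithmeticFunction.moebius a : ℂ) * f b / h b) (n := n)]
  refine Finset.sum_congr rfl fun x _ => ?_
  rw [zsmul_eq_mul, mul_div_assoc]
end

section
/- Let f be L-additive with h_f nonzero-valued. Then Λ_f(n) = -Σ_{d|n} μ(d) f(d)/h_f(d) for all n > 1. -/
open Finset

section Aux

variable {f h : ℕ → ℂ} (hL : IsLAdditive f h) (hne : ∀ n : ℕ, 0 < n → h n ≠ 0)

include hL in
lemma f_one_eq_zero : f 1 = 0 := by
  have h2 := hL.2 1 1 one_pos one_pos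
  rw [hL.1.1] at h2
  simp only [mul_one, one_mul] at h2
  linear_combination -h2

include hL hne in
lemma quot_add : ∀ m n : ℕ, 0 < m → 0 < n →
    f (m * n) / h (m * n) = f m / h m + f n / h n := by
  intro m n hm hn
  rw [hL.2 m n hm hn, hL.1.2 m n hm hn, div_add_div _ _ (hne m hm) (hne n hn)]
  ring_nf

include hL hne in
lemma quot_pow (p : ℕ) (hp : 0 < p) (k : ℕ) :
    f (p ^ k) / h (p ^ k) = k * (f p / h p) := by
  induction k with
  | zero => simp [f_one_eq_zero hL]
  | succ k ih =>
    rw [pow_succ, quot_add hL hne _ _ (pow_pos hp k) hp, ih]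
    push_cast
    ring

include hL hne in
lemma sum_genVonMangoldt : ∀ n : ℕ, 0 < n →
    ∑ d ∈ n.divisors, genVonMangoldt f h d = f n / h n := by
  refine Nat.recOnPrimeCoprime ?_ ?_ ?_
  · intro h0; exact absurd h0 (lt_irrefl 0)
  · intro p k hp _
    rw [Nat.sum_divisors_prime_pow hp, quot_pow hL hne p hp.pos,
      Finset.sum_range_succ']
    have h1 : genVonMangoldt f h (p ^ 0) = 0 := by
      rw [pow_zero, genVonMangoldt, if_neg not_isPrimePow_one]
    rw [h1, add_zero]
    have h2 : ∀ i ∈ Finset.range k, genVonMangoldt f h (p ^ (i + 1)) = f p / h p := by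
      intro i _
      have hpp : (p ^ (i + 1)).minFac = p := by
        rw [Nat.pow_minFac (Nat.succ_ne_zero i), hp.minFac_eq]
      rw [genVonMangoldt, if_pos (hp.prime.isPrimePow.pow (Nat.succ_ne_zero i)), hpp]
    rw [Finset.sum_congr rfl h2, Finset.sum_const, Finset.card_range, nsmul_eq_mul]
  · intro a b ha hb hab iha ihb _
    have ha0 : 0 < a := lt_trans one_pos ha
    have hb0 : 0 < b := lt_trans one_pos hb
    simp only [genVonMangoldt, ← Finset.sum_filter] at iha ihb ⊢
    rw [Nat.mul_divisors_filter_prime_pow hab, filter_union,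
      Finset.sum_union (Nat.disjoint_divisors_filter_isPrimePow hab), iha ha0, ihb hb0,
      quot_add hL hne a b ha0 hb0]

end Aux

theorem stmt5 (f h : ℕ → ℂ) (hL : IsLAdditive f h)
    (hne : ∀ n : ℕ, 0 < n → h n ≠ 0) (n : ℕ) (hn : 1 < n) :
    genVonMangoldt f h n =
      -∑ d ∈ n.divisors, (ArithmeticFunction.moebius d : ℂ) * f d / h d := by
  have hn0 : 0 < n := lt_trans one_pos hn
  have hinv := (ArithmeticFunction.sum_eq_iff_sum_smul_moebius_eq
    (f := genVonMangoldt f h) (g := fun n => f n / h n)).mp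
    (sum_genVonMangoldt hL hne) n hn0
  rw [← hinv, Nat.sum_divisorsAntidiagonal
    (fun i j => (ArithmeticFunction.moebius i : ℤ) • (f j / h j))]
  have key : ∀ d ∈ n.divisors,
      (ArithmeticFunction.moebius d : ℤ) • (f (n / d) / h (n / d)) =
        (ArithmeticFunction.moebius d : ℂ) * (f n / h n) -
          (ArithmeticFunction.moebius d : ℂ) * f d / h d := by
    intro d hd
    obtain ⟨hdn, -⟩ := Nat.mem_divisors.mp hd
    have hd0 : 0 < d := Nat.pos_of_mem_divisors hd
    have hq0 : 0 < n / d := Nat.div_pos (Nat.le_of_dvd hn0 hdn) hd0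
    have hmul : d * (n / d) = n := Nat.mul_div_cancel' hdn
    have hadd := quot_add hL hne d (n / d) hd0 hq0
    rw [hmul] at hadd
    rw [zsmul_eq_mul, hadd, mul_div_assoc]
    push_cast
    ring
  rw [Finset.sum_congr rfl key, Finset.sum_sub_distrib, ← Finset.sum_mul]
  have hz : (∑ d ∈ n.divisors, (ArithmeticFunction.moebius d : ℤ)) = 0 := by
    have h1 : (ArithmeticFunction.moebius * ArithmeticFunction.zeta :
        ArithmeticFunction ℤ) n = (1 : ArithmeticFunction ℤ) n := by
      rw [ArithmeticFunction.moebius_mul_coe_zeta]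
    rwa [ArithmeticFunction.coe_mul_zeta_apply, ArithmeticFunction.one_apply_ne hn.ne'] at h1
  have hz' : (∑ d ∈ n.divisors, ((ArithmeticFunction.moebius d : ℤ) : ℂ)) = 0 := by
    rw [← Int.cast_sum, hz, Int.cast_zero]
  rw [hz', zero_mul, zero_sub]
end

section
/- Let f be L-additive with h_f nonzero-valued, and let g be completely additive. Then Σ_{d|n} g(d)Λ_f(d) = (1/2) Σ_{p^a ∥ n} a(a+1) f(p)g(p)/h_f(p), where the sum is over primes p with p^a exactly dividing n. -/
open Finset

theorem stmt7 (f h g : ℕ → ℂ) (hL : IsLAdditive f h)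
    (hne : ∀ n : ℕ, 0 < n → h n ≠ 0) (hg : IsCompletelyAdditive g)
    (n : ℕ) (hn : 0 < n) :
    ∑ d ∈ n.divisors, g d * genVonMangoldt f h d =
      (1 / 2) * ∑ p ∈ n.primeFactors,
        (n.factorization p : ℂ) * ((n.factorization p : ℂ) + 1) * f p * g p / h p := by
  have hg1 : g 1 = 0 := by
    have := hg 1 1 one_pos one_pos; simp at this; linear_combination this
  have hgpow : ∀ p k : ℕ, 0 < p → g (p ^ k) = k * g p := by
    intro p k hp
    induction k with
    | zero => simpa using hg1
    | succ k ih =>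
      rw [pow_succ, hg (p ^ k) p (pow_pos hp k) hp, ih]
      push_cast; ring
  have hsupp : ∀ m : ℕ, ∑ d ∈ m.divisors, g d * genVonMangoldt f h d
      = ∑ d ∈ m.divisors.filter IsPrimePow, g d * genVonMangoldt f h d := by
    intro m
    rw [Finset.sum_filter]
    refine Finset.sum_congr rfl fun d _ => ?_
    by_cases hd : IsPrimePow d
    · simp [hd]
    · simp [genVonMangoldt, hd]
  revert hn
  induction n using Nat.recOnPrimeCoprime with
  | zero => intro hn; exact absurd hn (by norm_num)
  | prime_pow p k hp =>
    intro _
    rcases Nat.eq_zero_or_pos k with rfl | hk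
    · simp [genVonMangoldt, not_isPrimePow_one, hg1]
    · rw [Nat.sum_divisors_prime_pow hp]
      have hterm : ∀ i : ℕ, g (p ^ i) * genVonMangoldt f h (p ^ i)
          = (i : ℂ) * (g p * (f p / h p)) := by
        intro i
        rcases Nat.eq_zero_or_pos i with rfl | hi
        · simp [hg1]
        · rw [hgpow p i hp.pos]
          have hpp : IsPrimePow (p ^ i) := hp.prime.isPrimePow.pow hi.ne'
          rw [genVonMangoldt, if_pos hpp, hp.pow_minFac hi.ne']
          ring
      simp only [hterm]
      rw [← Finset.sum_mul]
      have hsum : ∀ m : ℕ, ∑ i ∈ Finset.range (m + 1), (i : ℂ) = m * (m + 1) / 2 := by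
        intro m
        induction m with
        | zero => simp
        | succ m ih => rw [Finset.sum_range_succ, ih]; push_cast; ring
      rw [hsum]
      have hpf : (p ^ k).primeFactors = {p} := by
        rw [Nat.primeFactors_pow p hk.ne', Nat.Prime.primeFactors hp]
      rw [hpf, Finset.sum_singleton]
      simp only [Nat.Prime.factorization_pow hp, Finsupp.single_eq_same]
      ring
  | coprime a b ha hb hab iha ihb =>
    intro _
    have ha0 : a ≠ 0 := by omega
    have hb0 : b ≠ 0 := by omega
    rw [hsupp, Nat.mul_divisors_filter_prime_pow hab, Finset.filter_union,
      Finset.sum_union (Nat.disjoint_divisors_filter_isPrimePow hab), ← hsupp, ← hsupp,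
      iha (by omega), ihb (by omega)]
    rw [Nat.primeFactors_mul ha0 hb0, Finset.sum_union hab.disjoint_primeFactors]
    have hfa : ∑ p ∈ a.primeFactors,
        (((a * b).factorization p : ℂ) * (((a * b).factorization p : ℂ) + 1) * f p * g p / h p)
        = ∑ p ∈ a.primeFactors,
        ((a.factorization p : ℂ) * ((a.factorization p : ℂ) + 1) * f p * g p / h p) := by
      refine Finset.sum_congr rfl fun p hp => ?_
      have hpb : b.factorization p = 0 := by
        apply Nat.factorization_eq_zero_of_not_dvd
        intro hdvd
        exact (Nat.prime_of_mem_primeFactors hp).ne_one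
          (Nat.eq_one_of_dvd_coprimes hab (Nat.dvd_of_mem_primeFactors hp) hdvd)
      rw [Nat.factorization_mul ha0 hb0]
      simp [hpb]
    have hfb : ∑ p ∈ b.primeFactors,
        (((a * b).factorization p : ℂ) * (((a * b).factorization p : ℂ) + 1) * f p * g p / h p)
        = ∑ p ∈ b.primeFactors,
        ((b.factorization p : ℂ) * ((b.factorization p : ℂ) + 1) * f p * g p / h p) := by
      refine Finset.sum_congr rfl fun p hp => ?_
      have hpa : a.factorization p = 0 := by
        apply Nat.factorization_eq_zero_of_not_dvd
        intro hdvd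
        exact (Nat.prime_of_mem_primeFactors hp).ne_one
          (Nat.eq_one_of_dvd_coprimes hab hdvd (Nat.dvd_of_mem_primeFactors hp))
      rw [Nat.factorization_mul ha0 hb0]
      simp [hpa]
    rw [hfa, hfb, mul_add]
end

section
/- Let f be L-additive with h_f nonzero-valued, and let g be completely additive. Then (Λ_f * g)(n) = f(n)g(n)/h_f(n) − Σ_{d|n} g(d)Λ_f(d). -/
open Finset

lemma sum_gvm (f h : ℕ → ℂ) (hL : IsLAdditive f h)
    (hne : ∀ n : ℕ, 0 < n → h n ≠ 0) :
    ∀ n : ℕ, 0 < n → ∑ d ∈ n.divisors, genVonMangoldt f h d = f n / h n := by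
  obtain ⟨⟨h1, hmul⟩, hadd⟩ := hL
  have hf1 : f 1 = 0 := by
    have := hadd 1 1 one_pos one_pos
    rw [mul_one, h1, mul_one] at this
    linear_combination -this
  have key : ∀ m n : ℕ, 0 < m → 0 < n →
      f (m * n) / h (m * n) = f m / h m + f n / h n := by
    intro m n hm hn
    rw [hadd m n hm hn, hmul m n hm hn]
    field_simp [hne m hm, hne n hn]
  have gvm_pp : ∀ p k : ℕ, p.Prime → k ≠ 0 →
      genVonMangoldt f h (p ^ k) = f p / h p := by
    intro p k hp hk
    rw [genVonMangoldt, if_pos (hp.prime.isPrimePow.pow hk), hp.pow_minFac hk]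
  have hpow : ∀ p k : ℕ, p.Prime → f (p ^ k) / h (p ^ k) = (k : ℂ) * (f p / h p) := by
    intro p k hp
    induction k with
    | zero => simp [hf1, h1]
    | succ k ih =>
        rw [pow_succ, key _ _ (pow_pos hp.pos k) hp.pos, ih]
        push_cast; ring
  intro n
  refine Nat.recOnPrimeCoprime ?_ ?_ ?_ n
  · intro h0; omega
  · intro p k hp _
    rw [Nat.sum_divisors_prime_pow hp, hpow p k hp, Finset.sum_range_succ']
    have h0 : genVonMangoldt f h (p ^ 0) = 0 := by
      simp [genVonMangoldt, not_isPrimePow_one]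
    rw [h0, add_zero]
    have : ∀ i ∈ Finset.range k, genVonMangoldt f h (p ^ (i + 1)) = f p / h p := by
      intro i _; exact gvm_pp p (i + 1) hp i.succ_ne_zero
    rw [Finset.sum_congr rfl this, Finset.sum_const, Finset.card_range, nsmul_eq_mul]
  · intro a b ha1 hb1 hab IHa IHb _
    have ha := IHa (by omega)
    have hb := IHb (by omega)
    simp only [genVonMangoldt, ← Finset.sum_filter] at ha hb ⊢
    rw [Nat.mul_divisors_filter_prime_pow hab, Finset.filter_union,
      Finset.sum_union (Nat.disjoint_divisors_filter_isPrimePow hab), ha, hb]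
    exact (key a b (by omega) (by omega)).symm

theorem stmt8 (f h g : ℕ → ℂ) (hL : IsLAdditive f h)
    (hne : ∀ n : ℕ, 0 < n → h n ≠ 0) (hg : IsCompletelyAdditive g)
    (n : ℕ) (hn : 0 < n) :
    ∑ d ∈ n.divisors, genVonMangoldt f h d * g (n / d) =
      f n * g n / h n - ∑ d ∈ n.divisors, g d * genVonMangoldt f h d := by
  have hgd : ∀ d ∈ n.divisors, g (n / d) = g n - g d := by
    intro d hd
    obtain ⟨hdvd, _⟩ := Nat.mem_divisors.mp hd
    have hd0 : 0 < d := Nat.pos_of_mem_divisors hd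
    have hq0 : 0 < n / d := Nat.div_pos (Nat.le_of_dvd hn hdvd) hd0
    have hne' : g n = g (n / d) + g d := by
      conv_lhs => rw [← Nat.div_mul_cancel hdvd]
      exact hg (n / d) d hq0 hd0
    rw [hne']; ring
  calc ∑ d ∈ n.divisors, genVonMangoldt f h d * g (n / d)
      = ∑ d ∈ n.divisors, (genVonMangoldt f h d * g n - g d * genVonMangoldt f h d) := by
        refine Finset.sum_congr rfl fun d hd => ?_
        rw [hgd d hd]; ring
    _ = (∑ d ∈ n.divisors, genVonMangoldt f h d) * g n
        - ∑ d ∈ n.divisors, g d * genVonMangoldt f h d := by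
        rw [Finset.sum_sub_distrib, Finset.sum_mul]
    _ = f n * g n / h n - ∑ d ∈ n.divisors, g d * genVonMangoldt f h d := by
        rw [sum_gvm f h hL hne n hn]; ring
end

section
/- Let f be L-additive with h_f nonzero-valued. For n > 1, the generalized Selberg identity holds: Λ_f(n)f(n)/h_f(n) + Σ_{d|n} Λ_f(d)Λ_f(n/d) = Σ_{d|n} μ(n/d) f(d)²/h_f(d)². -/
open Finset

namespace SelbergAux

open ArithmeticFunction
open scoped ArithmeticFunction.zeta ArithmeticFunction.Moebius

noncomputable def G (f h : ℕ → ℂ) : ArithmeticFunction ℂ :=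
  ⟨fun n => if n = 0 then 0 else f n / h n, by simp⟩

noncomputable def Lam (f h : ℕ → ℂ) : ArithmeticFunction ℂ :=
  ⟨genVonMangoldt f h, by simp [genVonMangoldt, not_isPrimePow_zero]⟩

variable {f h : ℕ → ℂ}

lemma G_apply {n : ℕ} (hn : n ≠ 0) : G f h n = f n / h n := by
  simp [G, hn]

lemma Lam_apply (n : ℕ) : Lam f h n = genVonMangoldt f h n := rfl

lemma f_one (hL : IsLAdditive f h) : f 1 = 0 := by
  have := hL.2 1 1 one_pos one_pos
  rw [hL.1.1] at this
  simp only [mul_one] at this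
  linear_combination -this

lemma G_mul (hL : IsLAdditive f h) (hne : ∀ n : ℕ, 0 < n → h n ≠ 0)
    {m n : ℕ} (hm : 0 < m) (hn : 0 < n) : G f h (m * n) = G f h m + G f h n := by
  rw [G_apply (Nat.mul_ne_zero hm.ne' hn.ne'), G_apply hm.ne', G_apply hn.ne',
    hL.2 m n hm hn, hL.1.2 m n hm hn]
  have h1 := hne m hm
  have h2 := hne n hn
  field_simp

lemma G_pow (hL : IsLAdditive f h) (hne : ∀ n : ℕ, 0 < n → h n ≠ 0)
    {p : ℕ} (hp : p.Prime) (k : ℕ) : G f h (p ^ k) = k * (f p / h p) := by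
  induction k with
  | zero => simp [G_apply one_ne_zero, f_one hL]
  | succ k ih =>
      rw [pow_succ, G_mul hL hne (pow_pos hp.pos k) hp.pos, ih,
        G_apply hp.pos.ne']
      push_cast
      ring

lemma Lam_prime_pow {p k : ℕ} (hp : p.Prime) (hk : k ≠ 0) :
    Lam f h (p ^ k) = f p / h p := by
  have hpp : IsPrimePow (p ^ k) := ⟨p, k, hp.prime, Nat.pos_of_ne_zero hk, rfl⟩
  rw [Lam_apply, genVonMangoldt, if_pos hpp, hp.pow_minFac hk]

lemma sum_Lam (hL : IsLAdditive f h) (hne : ∀ n : ℕ, 0 < n → h n ≠ 0) :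
    ∀ n : ℕ, n ≠ 0 → ∑ d ∈ n.divisors, Lam f h d = G f h n := by
  refine Nat.recOnPrimeCoprime ?_ ?_ ?_
  · intro hn; exact absurd rfl hn
  · intro p k hp _
    rw [Nat.sum_divisors_prime_pow hp, Finset.sum_range_succ', G_pow hL hne hp]
    have h0 : Lam f h (p ^ 0) = 0 := by
      simp [Lam_apply, genVonMangoldt, not_isPrimePow_one]
    rw [h0, add_zero]
    have : ∀ i ∈ Finset.range k, Lam f h (p ^ (i + 1)) = f p / h p := fun i _ =>
      Lam_prime_pow hp i.succ_ne_zero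
    rw [Finset.sum_congr rfl this, Finset.sum_const, nsmul_eq_mul, Finset.card_range]
  · intro a b ha hb hab iha ihb _
    have ha0 : a ≠ 0 := (Nat.lt_of_lt_of_le one_pos ha.le).ne'
    have hb0 : b ≠ 0 := (Nat.lt_of_lt_of_le one_pos hb.le).ne'
    have key : ∀ m : ℕ, ∑ d ∈ m.divisors, Lam f h d
        = ∑ d ∈ m.divisors.filter IsPrimePow, Lam f h d := by
      intro m
      rw [Finset.sum_filter]
      refine Finset.sum_congr rfl fun d _ => ?_
      by_cases hd : IsPrimePow d
      · rw [if_pos hd]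
      · rw [if_neg hd, Lam_apply, genVonMangoldt, if_neg hd]
    rw [key, Nat.mul_divisors_filter_prime_pow hab, Finset.filter_union,
      Finset.sum_union (Nat.disjoint_divisors_filter_isPrimePow hab),
      ← key, ← key, iha ha0, ihb hb0,
      G_mul hL hne (Nat.pos_of_ne_zero ha0) (Nat.pos_of_ne_zero hb0)]

lemma zeta_mul_Lam (hL : IsLAdditive f h) (hne : ∀ n : ℕ, 0 < n → h n ≠ 0) :
    (ζ : ArithmeticFunction ℂ) * Lam f h = G f h := by
  ext n
  rcases eq_or_ne n 0 with rfl | hn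
  · simp
  · rw [coe_zeta_mul_apply, sum_Lam hL hne n hn]

lemma pmul_derivation (hL : IsLAdditive f h) (hne : ∀ n : ℕ, 0 < n → h n ≠ 0)
    (a b : ArithmeticFunction ℂ) :
    (G f h).pmul (a * b) = ((G f h).pmul a) * b + a * ((G f h).pmul b) := by
  ext n
  simp only [pmul_apply, mul_apply, ArithmeticFunction.add_apply, Finset.mul_sum, ← Finset.sum_add_distrib]
  refine Finset.sum_congr rfl fun x hx => ?_
  obtain ⟨hx1, hx2⟩ := Nat.mem_divisorsAntidiagonal.mp hx
  have h1 : 0 < x.1 := Nat.pos_of_ne_zero fun h0 => hx2 (by rw [← hx1, h0, zero_mul])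
  have h2 : 0 < x.2 := Nat.pos_of_ne_zero fun h0 => hx2 (by rw [← hx1, h0, mul_zero])
  rw [← hx1, G_mul hL hne h1 h2]
  ring

lemma Lam_eq (hL : IsLAdditive f h) (hne : ∀ n : ℕ, 0 < n → h n ≠ 0) :
    Lam f h = (μ : ArithmeticFunction ℂ) * G f h := by
  rw [← zeta_mul_Lam hL hne, ← mul_assoc, coe_moebius_mul_coe_zeta, one_mul]

lemma key (hL : IsLAdditive f h) (hne : ∀ n : ℕ, 0 < n → h n ≠ 0) :
    (μ : ArithmeticFunction ℂ) * ((G f h).pmul (G f h))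
      = Lam f h * Lam f h + (G f h).pmul (Lam f h) := by
  calc (μ : ArithmeticFunction ℂ) * ((G f h).pmul (G f h))
      = (μ : ArithmeticFunction ℂ) *
          ((G f h).pmul ((ζ : ArithmeticFunction ℂ) * Lam f h)) := by
        rw [zeta_mul_Lam hL hne]
    _ = (μ : ArithmeticFunction ℂ) *
          (((G f h).pmul (ζ : ArithmeticFunction ℂ)) * Lam f h
            + (ζ : ArithmeticFunction ℂ) * ((G f h).pmul (Lam f h))) := by
        rw [pmul_derivation hL hne]
    _ = ((μ : ArithmeticFunction ℂ) * G f h) * Lam f h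
          + ((μ : ArithmeticFunction ℂ) * (ζ : ArithmeticFunction ℂ))
            * ((G f h).pmul (Lam f h)) := by
        rw [pmul_zeta]; ring
    _ = Lam f h * Lam f h + (G f h).pmul (Lam f h) := by
        rw [coe_moebius_mul_coe_zeta, one_mul, ← Lam_eq hL hne]

lemma main (hL : IsLAdditive f h) (hne : ∀ n : ℕ, 0 < n → h n ≠ 0) (n : ℕ) (hn : 1 < n) :
    genVonMangoldt f h n * f n / h n +
        ∑ d ∈ n.divisors, genVonMangoldt f h d * genVonMangoldt f h (n / d) =
      ∑ d ∈ n.divisors, (ArithmeticFunction.moebius (n / d) : ℂ) * f d ^ 2 / h d ^ 2 := by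
  have hn0 : n ≠ 0 := (one_pos.trans hn).ne'
  have hkey := congrArg (fun F : ArithmeticFunction ℂ => F n) (key hL hne)
  simp only [mul_apply, ArithmeticFunction.add_apply, pmul_apply] at hkey
  rw [Nat.sum_divisorsAntidiagonal'
        (f := fun a b => (μ : ArithmeticFunction ℂ) a * (G f h b * G f h b)),
      Nat.sum_divisorsAntidiagonal (f := fun a b => Lam f h a * Lam f h b)] at hkey
  simp only [← Lam_apply]
  have e1 : Lam f h n * f n / h n = G f h n * Lam f h n := by
    rw [G_apply hn0]; ring
  rw [e1, add_comm, ← hkey]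
  refine Finset.sum_congr rfl fun d hd => ?_
  have hd0 : d ≠ 0 := (Nat.pos_of_mem_divisors hd).ne'
  rw [G_apply hd0, intCoe_apply]
  ring

end SelbergAux

theorem stmt12 (f h : ℕ → ℂ) (hL : IsLAdditive f h)
    (hne : ∀ n : ℕ, 0 < n → h n ≠ 0) (n : ℕ) (hn : 1 < n) :
    genVonMangoldt f h n * f n / h n +
        ∑ d ∈ n.divisors, genVonMangoldt f h d * genVonMangoldt f h (n / d) =
      ∑ d ∈ n.divisors, (ArithmeticFunction.moebius (n / d) : ℂ) * f d ^ 2 / h d ^ 2 :=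
  SelbergAux.main hL hne n hn
end

section
/- Let f be completely additive. Then for n > 1, f(n)Λ_f(n) + Σ_{d|n} Λ_f(d)Λ_f(n/d) = Σ_{d|n} μ(n/d) f(d)², where Λ_f(n) = f(p) if n = p^k and 0 otherwise. -/
open Finset

/-- Von Mangoldt function associated to a completely additive `f`. -/
noncomputable def addVonMangoldt (f : ℕ → ℂ) (n : ℕ) : ℂ :=
  if IsPrimePow n then f n.minFac else 0

namespace Stmt14Aux

open ArithmeticFunction Nat
open scoped ArithmeticFunction ArithmeticFunction.zeta ArithmeticFunction.Moebius

variable (f : ℕ → ℂ)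

lemma addVM_zero : addVonMangoldt f 0 = 0 := by
  simp [addVonMangoldt, not_isPrimePow_zero]

lemma addVM_one : addVonMangoldt f 1 = 0 := by
  simp [addVonMangoldt, not_isPrimePow_one]

lemma addVM_pow {p k : ℕ} (hp : p.Prime) (hk : k ≠ 0) :
    addVonMangoldt f (p ^ k) = f p := by
  rw [addVonMangoldt, if_pos ((isPrimePow_pow_iff hk).2 hp.prime.isPrimePow),
    Nat.pow_minFac hk, hp.minFac_eq]

noncomputable def Lf : ArithmeticFunction ℂ := ⟨addVonMangoldt f, addVM_zero f⟩
noncomputable def Ff : ArithmeticFunction ℂ := ⟨fun n => if n = 0 then 0 else f n, by simp⟩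
noncomputable def Gf : ArithmeticFunction ℂ :=
  ⟨fun n => f n * addVonMangoldt f n, by simp [addVM_zero]⟩
noncomputable def F2f : ArithmeticFunction ℂ := ⟨fun n => if n = 0 then 0 else f n ^ 2, by simp⟩

variable (hf : IsCompletelyAdditive f)
include hf

lemma f_one : f 1 = 0 := by
  have := hf 1 1 one_pos one_pos; simpa using this

lemma f_pow {p : ℕ} (hp : 0 < p) (k : ℕ) : f (p ^ k) = k * f p := by
  induction k with
  | zero => simp [f_one f hf]
  | succ k ih =>
    rw [pow_succ, hf _ _ (pow_pos hp k) hp, ih]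
    push_cast; ring

lemma sumL (n : ℕ) : ∑ d ∈ n.divisors, addVonMangoldt f d = Ff f n := by
  refine Nat.recOnPrimeCoprime ?_ ?_ ?_ n
  · simp [Ff]
  · intro p k hp
    rw [Nat.sum_divisors_prime_pow hp, Finset.sum_range_succ']
    rw [Finset.sum_congr rfl fun i _ => addVM_pow f hp i.succ_ne_zero]
    simp only [pow_zero, addVM_one, add_zero, Finset.sum_const, Finset.card_range,
      nsmul_eq_mul, Ff, ArithmeticFunction.coe_mk, if_neg (pow_ne_zero k hp.pos.ne')]
    exact (f_pow f hf hp.pos k).symm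
  · intro a b ha hb hab iha ihb
    simp only [Ff, ArithmeticFunction.coe_mk] at iha ihb ⊢
    have ha0 : a ≠ 0 := by omega
    have hb0 : b ≠ 0 := by omega
    rw [if_neg ha0] at iha
    rw [if_neg hb0] at ihb
    simp only [addVonMangoldt, ← Finset.sum_filter] at iha ihb ⊢
    rw [Nat.mul_divisors_filter_prime_pow hab, Finset.filter_union,
      Finset.sum_union (Nat.disjoint_divisors_filter_isPrimePow hab), iha, ihb,
      if_neg (mul_ne_zero ha0 hb0)]
    exact (hf a b (by omega) (by omega)).symm

lemma Lf_mul_zeta : Lf f * ζ = Ff f := by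
  ext n
  rw [ArithmeticFunction.coe_mul_zeta_apply]
  exact sumL f hf n

lemma Ff_mul_moebius : Ff f * (μ : ArithmeticFunction ℂ) = Lf f := by
  rw [← Lf_mul_zeta f hf, mul_assoc, coe_zeta_mul_coe_moebius, mul_one]

lemma F2_eq : F2f f = Gf f * ζ + Lf f * Ff f := by
  ext n
  rcases eq_or_ne n 0 with rfl | hn
  · simp
  rw [ArithmeticFunction.add_apply, ArithmeticFunction.coe_mul_zeta_apply,
    ArithmeticFunction.mul_apply,
    Nat.sum_divisorsAntidiagonal (fun i j => Lf f i * Ff f j), ← Finset.sum_add_distrib]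
  have key : ∀ d ∈ n.divisors, Gf f d + Lf f d * Ff f (n / d) = addVonMangoldt f d * f n := by
    intro d hd
    obtain ⟨hdvd, -⟩ := Nat.mem_divisors.mp hd
    have hd0 : 0 < d := Nat.pos_of_mem_divisors hd
    have hq0 : 0 < n / d := Nat.div_pos (Nat.le_of_dvd (Nat.pos_of_ne_zero hn) hdvd) hd0
    have hfn : f n = f d + f (n / d) := by
      conv_lhs => rw [← Nat.div_mul_cancel hdvd]
      rw [hf _ _ hq0 hd0]; ring
    simp only [Gf, Lf, Ff, ArithmeticFunction.coe_mk, if_neg hq0.ne']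
    rw [hfn]; ring
  rw [Finset.sum_congr rfl key, ← Finset.sum_mul, sumL f hf n]
  simp only [F2f, Ff, ArithmeticFunction.coe_mk, if_neg hn]
  ring

end Stmt14Aux

theorem stmt14 (f : ℕ → ℂ) (hf : IsCompletelyAdditive f) (n : ℕ) (hn : 1 < n) :
    f n * addVonMangoldt f n +
        ∑ d ∈ n.divisors, addVonMangoldt f d * addVonMangoldt f (n / d) =
      ∑ d ∈ n.divisors, (ArithmeticFunction.moebius (n / d) : ℂ) * f d ^ 2 := by
  open Stmt14Aux ArithmeticFunction in
  have h1 : F2f f * (ArithmeticFunction.moebius : ArithmeticFunction ℂ) =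
      Gf f + Lf f * Lf f := by
    rw [F2_eq f hf, add_mul, mul_assoc, coe_zeta_mul_coe_moebius, mul_one, mul_assoc,
      Ff_mul_moebius f hf]
  have h2 := congrArg (fun F => F n) h1
  simp only [ArithmeticFunction.add_apply, ArithmeticFunction.mul_apply] at h2
  rw [Nat.sum_divisorsAntidiagonal (fun i j => F2f f i * (ArithmeticFunction.moebius :
      ArithmeticFunction ℂ) j),
    Nat.sum_divisorsAntidiagonal (fun i j => Lf f i * Lf f j)] at h2
  have hn0 : n ≠ 0 := by omega
  have hL : (∑ d ∈ n.divisors, Lf f d * Lf f (n / d)) =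
      ∑ d ∈ n.divisors, addVonMangoldt f d * addVonMangoldt f (n / d) := rfl
  have hG : Gf f n = f n * addVonMangoldt f n := rfl
  have hR : (∑ d ∈ n.divisors, F2f f d *
      (ArithmeticFunction.moebius : ArithmeticFunction ℂ) (n / d)) =
      ∑ d ∈ n.divisors, (ArithmeticFunction.moebius (n / d) : ℂ) * f d ^ 2 := by
    refine Finset.sum_congr rfl fun d hd => ?_
    have hd0 : d ≠ 0 := (Nat.pos_of_mem_divisors hd).ne'
    simp only [F2f, ArithmeticFunction.coe_mk, if_neg hd0, ArithmeticFunction.intCoe_apply]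
    ring
  rw [hL, hG, hR] at h2
  exact h2.symm
end

section
/- For every integer n > 0 and integer k, Σ_{d|n} Λ_Ω(d) β_k(n/d) = Ω(n)β_k(n) − β_k(n), where Λ_Ω(n) = 1 if n is a prime power and 0 otherwise, Ω(n) is the number of prime factors of n with multiplicity, and β_k(n) = Σ_{p|n} p^k. -/
open Finset

/-- `β k n = Σ_{p | n prime} p^k`. -/
noncomputable def betaFn (k : ℤ) (n : ℕ) : ℂ :=
  ∑ p ∈ n.primeFactors, (p : ℂ) ^ k

/-- `Ω n`: number of prime factors with multiplicity, as a complex number. -/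
def bigOmega (n : ℕ) : ℂ := ((n.primeFactorsList.length : ℕ) : ℂ)

/-- `Λ_Ω n = 1` if `n` is a prime power, else `0`. -/
noncomputable def lambdaOmega (n : ℕ) : ℂ := if IsPrimePow n then 1 else 0

lemma aux_filter (n : ℕ) (hn : 0 < n) :
    n.divisors.filter IsPrimePow =
      n.primeFactors.biUnion (fun p => (Finset.Icc 1 (n.factorization p)).image (p ^ ·)) := by
  ext d
  simp only [mem_filter, Nat.mem_divisors, mem_biUnion, mem_image, Finset.mem_Icc,
    Nat.mem_primeFactors]
  constructor
  · rintro ⟨⟨hd, hn0⟩, hpp⟩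
    obtain ⟨p, a, hp, ha, rfl⟩ := hpp
    rw [← Nat.prime_iff] at hp
    refine ⟨p, ⟨hp, dvd_trans (dvd_pow_self p ha.ne') hd, hn.ne'⟩, a, ⟨ha, ?_⟩, rfl⟩
    rw [← Nat.Prime.pow_dvd_iff_le_factorization hp hn.ne']
    exact hd
  · rintro ⟨p, ⟨hp, hpd, -⟩, a, ⟨ha1, ha2⟩, rfl⟩
    refine ⟨⟨?_, hn.ne'⟩, (hp.prime.isPrimePow).pow (by omega)⟩
    exact (Nat.Prime.pow_dvd_iff_le_factorization hp hn.ne').2 ha2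

lemma aux_length (n : ℕ) :
    n.primeFactorsList.length = ∑ p ∈ n.primeFactors, n.factorization p := by
  conv_lhs => rw [← Multiset.coe_card (n.primeFactorsList), ← Multiset.toFinset_sum_count_eq]
  apply Finset.sum_congr
  · rfl
  · intro p _
    simp [Nat.factorization]

lemma aux_primeFactors_div (n p a : ℕ) (hp : p.Prime) (hn : n ≠ 0) (ha : 1 ≤ a)
    (ham : a ≤ n.factorization p) :
    (n / p ^ a).primeFactors =
      if a = n.factorization p then n.primeFactors.erase p else n.primeFactors := by
  have hd : p ^ a ∣ n := (Nat.Prime.pow_dvd_iff_le_factorization hp hn).2 ham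
  have hfac : (n / p ^ a).factorization = n.factorization - Finsupp.single p a := by
    rw [Nat.factorization_div hd, Nat.Prime.factorization_pow hp]
  ext q
  rcases eq_or_ne q p with rfl | hne
  · rw [← Nat.support_factorization, hfac]
    simp only [Finsupp.mem_support_iff, Finsupp.tsub_apply, Finsupp.single_eq_same]
    split_ifs with h
    · simp [Finset.mem_erase]; omega
    · rw [← Nat.support_factorization]
      simp only [Finsupp.mem_support_iff]
      omega
  · have : q ∈ (n / p ^ a).primeFactors ↔ q ∈ n.primeFactors := by
      rw [← Nat.support_factorization, hfac, ← Nat.support_factorization]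
      simp only [Finsupp.mem_support_iff, Finsupp.tsub_apply, Finsupp.single_apply,
        if_neg (Ne.symm hne), Nat.sub_zero]
    rw [this]
    split_ifs with h
    · simp [Finset.mem_erase, hne]
    · rfl

lemma aux_beta_div (n p a : ℕ) (k : ℤ) (hp : p.Prime) (hn : n ≠ 0) (ha : 1 ≤ a)
    (ham : a ≤ n.factorization p) (hpn : p ∈ n.primeFactors) :
    betaFn k (n / p ^ a) = betaFn k n - (if a = n.factorization p then (p : ℂ) ^ k else 0) := by
  unfold betaFn
  rw [aux_primeFactors_div n p a hp hn ha ham]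
  split_ifs with h
  · rw [← Finset.add_sum_erase _ _ hpn]
    ring
  · ring

theorem stmt15 (n : ℕ) (hn : 0 < n) (k : ℤ) :
    ∑ d ∈ n.divisors, lambdaOmega d * betaFn k (n / d) =
      bigOmega n * betaFn k n - betaFn k n := by
  have step1 : ∑ d ∈ n.divisors, lambdaOmega d * betaFn k (n / d) =
      ∑ d ∈ n.divisors.filter IsPrimePow, betaFn k (n / d) := by
    rw [Finset.sum_filter]
    refine Finset.sum_congr rfl fun d _ => ?_
    unfold lambdaOmega
    split_ifs <;> simp
  rw [step1, aux_filter n hn]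
  rw [Finset.sum_biUnion]
  · have step2 : ∀ p ∈ n.primeFactors,
        ∑ d ∈ (Finset.Icc 1 (n.factorization p)).image (p ^ ·), betaFn k (n / d) =
          (n.factorization p : ℂ) * betaFn k n - (p : ℂ) ^ k := by
      intro p hp
      have hpp : p.Prime := Nat.prime_of_mem_primeFactors hp
      rw [Finset.sum_image (fun a _ b _ hab =>
        Nat.pow_right_injective hpp.two_le hab)]
      have hm1 : 1 ≤ n.factorization p := by
        rw [← Nat.Prime.dvd_iff_one_le_factorization hpp hn.ne']
        exact Nat.dvd_of_mem_primeFactors hp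
      calc ∑ a ∈ Finset.Icc 1 (n.factorization p), betaFn k (n / p ^ a)
          = ∑ a ∈ Finset.Icc 1 (n.factorization p),
            (betaFn k n - (if a = n.factorization p then (p : ℂ) ^ k else 0)) := by
            refine Finset.sum_congr rfl fun a haI => ?_
            rw [Finset.mem_Icc] at haI
            exact aux_beta_div n p a k hpp hn.ne' haI.1 haI.2 hp
        _ = (n.factorization p : ℂ) * betaFn k n - (p : ℂ) ^ k := by
            rw [Finset.sum_sub_distrib, Finset.sum_const, Nat.card_Icc,
              Finset.sum_ite_eq' _ (n.factorization p) (fun _ => (p : ℂ) ^ k),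
              if_pos (Finset.mem_Icc.2 ⟨hm1, le_refl _⟩)]
            simp [Nat.add_sub_cancel, nsmul_eq_mul]
    rw [Finset.sum_congr rfl step2, Finset.sum_sub_distrib, ← Finset.sum_mul]
    unfold bigOmega betaFn
    rw [aux_length n]
    push_cast
    ring
  · -- pairwise disjoint
    intro p hp q hq hpq
    simp only [Finset.disjoint_left, mem_image, Finset.mem_Icc]
    rintro d ⟨a, ⟨ha1, -⟩, rfl⟩ ⟨b, ⟨hb1, -⟩, hbd⟩
    rw [Finset.mem_coe, Nat.mem_primeFactors] at hp hq
    apply hpq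
    have hqa : q ∣ p ^ a := hbd ▸ dvd_pow_self q (by omega : b ≠ 0)
    have := Nat.Prime.dvd_of_dvd_pow hq.1 hqa
    exact ((Nat.prime_dvd_prime_iff_eq hq.1 hp.1).1 this).symm
end

section
/- For every n > 0 and integer k, Σ_{d|n} Λ_Ld(d) β_k(n/d) = Ld(n)β_k(n) − β_{k−1}(n), where Ld(n) = Σ_{p^a ∥ n} a/p is the arithmetic logarithmic derivative, Λ_Ld(n) = 1/p if n = p^m (m ≥ 1), else 0, and β_k(n) = Σ_{p|n} p^k. -/
open Finset

/-- Arithmetic logarithmic derivative `Ld n = Σ_{p^a ∥ n} a / p`. -/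
noncomputable def Ld (n : ℕ) : ℂ :=
  ∑ p ∈ n.primeFactors, (n.factorization p : ℂ) / (p : ℂ)

/-- `Λ_Ld n = 1/p` if `n = p^m` with `m ≥ 1`, else `0`. -/
noncomputable def lambdaLd (n : ℕ) : ℂ :=
  if IsPrimePow n then 1 / (n.minFac : ℂ) else 0

lemma sum_primePow_divisors (n : ℕ) (hn : 0 < n) (F : ℕ → ℂ)
    (hF : ∀ d, ¬ IsPrimePow d → F d = 0) :
    ∑ d ∈ n.divisors, F d =
      ∑ p ∈ n.primeFactors, ∑ j ∈ Icc 1 (n.factorization p), F (p ^ j) := by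
  rw [← Finset.sum_filter_of_ne (p := IsPrimePow) (fun d _ h => by
    by_contra hpp; exact h (hF d hpp))]
  rw [Finset.sum_sigma']
  refine Finset.sum_nbij' (fun d => ⟨d.minFac, d.factorization d.minFac⟩)
    (fun x => x.1 ^ x.2) ?_ ?_ ?_ ?_ ?_
  · intro d hd
    simp only [Finset.mem_filter, Nat.mem_divisors] at hd
    obtain ⟨⟨hdn, hn0⟩, hpp⟩ := hd
    obtain ⟨p, m, hp, hm, rfl⟩ := hpp
    rw [Nat.Prime.pow_minFac hp.nat_prime hm.ne', hp.nat_prime.factorization_pow]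
    simp only [Finsupp.single_eq_same]
    simp only [Finset.mem_sigma, Nat.mem_primeFactors, Finset.mem_Icc]
    refine ⟨⟨hp.nat_prime, dvd_trans (dvd_trans (dvd_pow_self p hm.ne') hdn) dvd_rfl, hn0⟩,
      hm, ?_⟩
    rwa [← Nat.Prime.pow_dvd_iff_le_factorization hp.nat_prime hn0]
  · intro x hx
    simp only [Finset.mem_sigma, Nat.mem_primeFactors, Finset.mem_Icc] at hx
    obtain ⟨⟨hp, hpn, hn0⟩, h1, h2⟩ := hx
    simp only [Finset.mem_filter, Nat.mem_divisors]
    exact ⟨⟨(Nat.Prime.pow_dvd_iff_le_factorization hp hn0).2 h2, hn0⟩,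
      hp.prime.isPrimePow.pow (by omega)⟩
  · intro d hd
    simp only [Finset.mem_filter] at hd
    exact hd.2.minFac_pow_factorization_eq
  · rintro ⟨p, j⟩ hx
    simp only [Finset.mem_sigma, Nat.mem_primeFactors, Finset.mem_Icc] at hx
    obtain ⟨⟨hp, hpn, hn0⟩, h1, h2⟩ := hx
    have hm : j ≠ 0 := by omega
    dsimp only
    rw [Nat.Prime.pow_minFac hp hm, hp.factorization_pow, Finsupp.single_eq_same]
  · intro d hd
    simp only [Finset.mem_filter] at hd
    rw [hd.2.minFac_pow_factorization_eq]

lemma betaFn_div_pow {n p : ℕ} (hn : 0 < n) (hp : p.Prime) (j : ℕ)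
    (h1 : 1 ≤ j) (h2 : j ≤ n.factorization p) (k : ℤ) :
    betaFn k (n / p ^ j) =
      betaFn k n - (if j = n.factorization p then (p : ℂ) ^ k else 0) := by
  have hdvd : p ^ j ∣ n := (Nat.Prime.pow_dvd_iff_le_factorization hp hn.ne').2 h2
  have hpn : p ∈ n.primeFactors := by
    rw [Nat.mem_primeFactors]
    exact ⟨hp, dvd_trans (dvd_pow_self p (by omega)) hdvd, hn.ne'⟩
  have hfac : (n / p ^ j).factorization = n.factorization - (p ^ j).factorization :=
    Nat.factorization_div hdvd
  have hsupp : ∀ q : ℕ, (n / p ^ j).factorization q =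
      if q = p then n.factorization p - j else n.factorization q := by
    intro q
    rw [hfac, Finsupp.tsub_apply, hp.factorization_pow, Finsupp.single_apply]
    rcases eq_or_ne q p with h | h
    · subst h; simp
    · simp [h, Ne.symm h]
  by_cases hcase : j = n.factorization p
  · have hset : (n / p ^ j).primeFactors = n.primeFactors.erase p := by
      ext q
      rw [Finset.mem_erase, ← Nat.support_factorization, ← Nat.support_factorization,
        Finsupp.mem_support_iff, Finsupp.mem_support_iff, hsupp]
      constructor
      · intro h
        have hq : q ≠ p := by intro hq; subst hq; simp [hcase] at h
        rw [if_neg hq] at h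
        exact ⟨hq, h⟩
      · rintro ⟨hq, h⟩
        rwa [if_neg hq]
    rw [betaFn, betaFn, hset, if_pos hcase, eq_sub_iff_add_eq,
      Finset.sum_erase_add _ _ hpn]
  · have hset : (n / p ^ j).primeFactors = n.primeFactors := by
      ext q
      rw [← Nat.support_factorization, ← Nat.support_factorization,
        Finsupp.mem_support_iff, Finsupp.mem_support_iff, hsupp]
      rcases eq_or_ne q p with hq | hq
      · subst hq
        rw [if_pos rfl]
        omega
      · simp [hq]
    rw [betaFn, betaFn, hset, if_neg hcase, sub_zero]

theorem stmt16 (n : ℕ) (hn : 0 < n) (k : ℤ) :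
    ∑ d ∈ n.divisors, lambdaLd d * betaFn k (n / d) =
      Ld n * betaFn k n - betaFn (k - 1) n := by
  rw [sum_primePow_divisors n hn _ (fun d hd => by simp [lambdaLd, hd])]
  have key : ∀ p ∈ n.primeFactors,
      ∑ j ∈ Icc 1 (n.factorization p), lambdaLd (p ^ j) * betaFn k (n / p ^ j) =
        (n.factorization p : ℂ) / p * betaFn k n - (p : ℂ) ^ (k - 1) := by
    intro p hp
    rw [Nat.mem_primeFactors] at hp
    obtain ⟨hp, hpn, hn0⟩ := hp
    have ha : 1 ≤ n.factorization p := by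
      rw [← Nat.Prime.pow_dvd_iff_le_factorization hp hn0, pow_one]; exact hpn
    have hl : ∀ j ∈ Icc 1 (n.factorization p),
        lambdaLd (p ^ j) * betaFn k (n / p ^ j) =
          (1 / (p : ℂ)) * (betaFn k n - if j = n.factorization p then (p : ℂ) ^ k else 0) := by
      intro j hj
      rw [Finset.mem_Icc] at hj
      rw [lambdaLd, if_pos (hp.prime.isPrimePow.pow (by omega)),
        Nat.Prime.pow_minFac hp (by omega),
        betaFn_div_pow hn hp j hj.1 hj.2 k]
    rw [Finset.sum_congr rfl hl]
    simp only [mul_sub, Finset.sum_sub_distrib, mul_ite, mul_zero,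
      Finset.sum_ite_eq' (Icc 1 (n.factorization p)) (n.factorization p)]
    rw [Finset.sum_const, Nat.card_Icc, if_pos (Finset.mem_Icc.2 ⟨ha, le_rfl⟩)]
    have hpne : (p : ℂ) ≠ 0 := Nat.cast_ne_zero.2 hp.pos.ne'
    have : (1 / (p : ℂ)) * (p : ℂ) ^ k = (p : ℂ) ^ (k - 1) := by
      rw [zpow_sub_one₀ hpne]; ring
    rw [this, Nat.add_sub_cancel, nsmul_eq_mul]
    ring
  rw [Finset.sum_congr rfl key, Finset.sum_sub_distrib, Ld, betaFn, betaFn, Finset.sum_mul]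
end

section
/- For every n > 0 and integer k, Σ_{d|n} Λ_A(d) β_k(n/d) = A(n)β_k(n) − β_{k+1}(n), where A(n) = Σ_{p^a ∥ n} a·p is the sum of prime factors with multiplicity, Λ_A(n) = p if n = p^m (m ≥ 1), else 0, and β_k(n) = Σ_{p|n} p^k. -/
open Finset

/-- `A n = Σ_{p^a ∥ n} a * p`, the sum of prime factors with multiplicity. -/
noncomputable def sopfr (n : ℕ) : ℂ :=
  ∑ p ∈ n.primeFactors, (n.factorization p : ℂ) * (p : ℂ)

/-- `Λ_A n = p` if `n = p^m` with `m ≥ 1`, else `0`. -/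
noncomputable def lambdaA (n : ℕ) : ℂ :=
  if IsPrimePow n then (n.minFac : ℂ) else 0

lemma divisors_filter_ipp (n : ℕ) (hn : n ≠ 0) :
    n.divisors.filter IsPrimePow =
      n.primeFactors.biUnion (fun p => (Finset.Icc 1 (n.factorization p)).image (p ^ ·)) := by
  ext d
  simp only [Finset.mem_filter, Nat.mem_divisors, Finset.mem_biUnion, Finset.mem_image,
    Finset.mem_Icc, Nat.mem_primeFactors, isPrimePow_nat_iff]
  constructor
  · rintro ⟨⟨hd, -⟩, p, a, hp, ha, rfl⟩
    exact ⟨p, ⟨hp, dvd_trans (dvd_pow_self p ha.ne') hd, hn⟩, a,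
      ⟨ha, (Nat.Prime.pow_dvd_iff_le_factorization hp hn).1 hd⟩, rfl⟩
  · rintro ⟨p, ⟨hp, hpn, -⟩, a, ⟨ha1, ha2⟩, rfl⟩
    exact ⟨⟨(Nat.Prime.pow_dvd_iff_le_factorization hp hn).2 ha2, hn⟩, p, a, hp, ha1, rfl⟩

lemma fact_div_pow {n p : ℕ} (hn : n ≠ 0) (hp : p.Prime) {a : ℕ}
    (ha : a ≤ n.factorization p) (q : ℕ) :
    (n / p ^ a).factorization q = n.factorization q - if q = p then a else 0 := by
  rw [Nat.factorization_div ((Nat.Prime.pow_dvd_iff_le_factorization hp hn).2 ha),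
    Nat.Prime.factorization_pow hp]
  simp [Finsupp.single_apply, eq_comm]

lemma pf_div_pow_lt {n p : ℕ} (hn : n ≠ 0) (hp : p.Prime) {a : ℕ}
    (ha : a < n.factorization p) :
    (n / p ^ a).primeFactors = n.primeFactors := by
  ext q
  rw [← Nat.support_factorization, ← Nat.support_factorization, Finsupp.mem_support_iff,
    Finsupp.mem_support_iff, fact_div_pow hn hp ha.le]
  rcases eq_or_ne q p with rfl | h
  · rw [if_pos rfl]
    omega
  · simp [h]

lemma pf_div_pow_eq {n p : ℕ} (hn : n ≠ 0) (hp : p.Prime) :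
    (n / p ^ n.factorization p).primeFactors = n.primeFactors.erase p := by
  ext q
  rw [Finset.mem_erase, ← Nat.support_factorization, ← Nat.support_factorization,
    Finsupp.mem_support_iff, Finsupp.mem_support_iff, fact_div_pow hn hp le_rfl]
  rcases eq_or_ne q p with rfl | h
  · simp
  · simp [h]

lemma innerSum17 (n : ℕ) (hn : n ≠ 0) (k : ℤ) {p : ℕ} (hp : p ∈ n.primeFactors) :
    ∑ a ∈ Finset.Icc 1 (n.factorization p), (p : ℂ) * betaFn k (n / p ^ a) =
      (n.factorization p : ℂ) * (p : ℂ) * betaFn k n - (p : ℂ) ^ (k + 1) := by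
  obtain ⟨hpp, hpn, -⟩ := Nat.mem_primeFactors.1 hp
  set v := n.factorization p with hv
  have hv1 : 1 ≤ v := (Nat.Prime.factorization_pos_of_dvd hpp hn hpn)
  have hsplit : Finset.Icc 1 v = insert v (Finset.Icc 1 (v - 1)) := by
    ext a; simp [Finset.mem_Icc, Finset.mem_insert]; omega
  have hbv : betaFn k (n / p ^ v) = betaFn k n - (p : ℂ) ^ k := by
    unfold betaFn
    rw [pf_div_pow_eq hn hpp, eq_sub_iff_add_eq, Finset.sum_erase_add _ _ hp]
  have hpa : ∀ a ∈ Finset.Icc 1 (v - 1), (p : ℂ) * betaFn k (n / p ^ a) =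
      (p : ℂ) * betaFn k n := by
    intro a ha
    rw [Finset.mem_Icc] at ha
    unfold betaFn
    rw [pf_div_pow_lt hn hpp (by omega)]
  rw [hsplit, Finset.sum_insert (by simp; omega), Finset.sum_congr rfl hpa, hbv,
    Finset.sum_const, Nat.card_Icc]
  have hpne : (p : ℂ) ≠ 0 := Nat.cast_ne_zero.2 hpp.pos.ne'
  rw [zpow_add₀ hpne, zpow_one]
  have : ((v - 1 + 1 - 1 : ℕ) : ℂ) = (v : ℂ) - 1 := by
    have : v - 1 + 1 - 1 = v - 1 := by omega
    rw [this, Nat.cast_sub hv1, Nat.cast_one]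
  rw [nsmul_eq_mul, this]
  ring

theorem stmt17 (n : ℕ) (hn : 0 < n) (k : ℤ) :
    ∑ d ∈ n.divisors, lambdaA d * betaFn k (n / d) =
      sopfr n * betaFn k n - betaFn (k + 1) n := by
  have hn0 : n ≠ 0 := hn.ne'
  have h1 : ∑ d ∈ n.divisors, lambdaA d * betaFn k (n / d) =
      ∑ d ∈ n.divisors.filter IsPrimePow, (d.minFac : ℂ) * betaFn k (n / d) := by
    rw [Finset.sum_filter]
    refine Finset.sum_congr rfl fun d _ => ?_
    unfold lambdaA
    split_ifs <;> simp
  rw [h1, divisors_filter_ipp n hn0, Finset.sum_biUnion, ]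
  · have h2 : ∀ p ∈ n.primeFactors,
        ∑ d ∈ (Finset.Icc 1 (n.factorization p)).image (p ^ ·),
          (d.minFac : ℂ) * betaFn k (n / d) =
        (n.factorization p : ℂ) * (p : ℂ) * betaFn k n - (p : ℂ) ^ (k + 1) := by
      intro p hp
      obtain ⟨hpp, -, -⟩ := Nat.mem_primeFactors.1 hp
      rw [Finset.sum_image (fun a _ b _ h => Nat.pow_right_injective hpp.two_le h)]
      rw [← innerSum17 n hn0 k hp]
      refine Finset.sum_congr rfl fun a ha => ?_
      rw [Finset.mem_Icc] at ha
      rw [Nat.Prime.pow_minFac hpp (by omega)]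
    rw [Finset.sum_congr rfl h2, Finset.sum_sub_distrib]
    unfold sopfr betaFn
    rw [Finset.sum_mul]
  · intro p hp q hq hpq
    simp only [Function.onFun]
    rw [Finset.disjoint_left]
    rintro d hd1 hd2
    simp only [Finset.mem_image, Finset.mem_Icc] at hd1 hd2
    obtain ⟨a, ⟨ha1, -⟩, rfl⟩ := hd1
    obtain ⟨b, ⟨hb1, -⟩, hb⟩ := hd2
    obtain ⟨hpp, -, -⟩ := Nat.mem_primeFactors.1 hp
    obtain ⟨hqq, -, -⟩ := Nat.mem_primeFactors.1 hq
    apply hpq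
    have hqd : q ∣ p ^ a := hb ▸ dvd_pow_self q (by omega)
    exact ((Nat.prime_dvd_prime_iff_eq hqq hpp).1 (Nat.Prime.dvd_of_dvd_pow hqq hqd)).symm
end
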